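/- Let G1,…,Gt be vertex-disjoint graphs and let G' be obtained by choosing, for each i, vertices forming a path linking designated vertices across copies as follows: for each i, take k+1 disjoint copies G_i^1,…,G_i^{k+1} of G_i with designated vertices v_i^1,…,v_i^{k+1}, add edges (v_i^ℓ, v_i^{ℓ+1}) for 1 ≤ ℓ ≤ k and (v_i^{k+1}, v_{i+1}^1) for 1 ≤ i ≤ t−1. If X ⊆ V(G') has |X| = k, G'[X] is connected and G'[V(G')\X] is connected, then X contains none of the designated vertices v_i^j and X is entirely contained within a single copy G_i^j. -/

import Mathlib

/-- The composed graph: `k+1` copies of each of the `t` graphs `G i`, where copy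
`(i, ℓ)` is linked through its designated vertex `v i` to the designated vertex of
copy `(i, ℓ+1)`, and copy `(i, k)` (the last copy of `G i`) is linked to copy
`(i+1, 0)`. -/
def composedGraph {V : Type*} {t : ℕ} (G : Fin t → SimpleGraph V) (v : Fin t → V)
    (k : ℕ) : SimpleGraph (Fin t × Fin (k + 1) × V) :=
  SimpleGraph.fromRel (fun x y =>
    (x.1 = y.1 ∧ x.2.1 = y.2.1 ∧ (G x.1).Adj x.2.2 y.2.2) ∨
    (x.1 = y.1 ∧ x.2.2 = v x.1 ∧ y.2.2 = v y.1 ∧ (x.2.1 : ℕ) + 1 = (y.2.1 : ℕ)) ∨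
    ((x.1 : ℕ) + 1 = (y.1 : ℕ) ∧ x.2.1 = Fin.last k ∧ (y.2.1 : ℕ) = 0 ∧
      x.2.2 = v x.1 ∧ y.2.2 = v y.1))

/-!
Every edge of the composed graph that leaves a copy `G_i^ℓ` is incident to its designated
vertex, so a walk avoiding the designated vertex of the copy it starts in never leaves that copy.
If `X` contained the designated vertex of some copy, that copy would still have a vertex
outside `X` (it has at least `k + 1` others), and since there are `k + 1 ≥ 2` copies of `G_i`
and `|X| = k` is smaller than a copy, so would another copy; the two cannot be joined in
`G' - X`, contradicting its connectivity. Hence `X` avoids all designated vertices, and being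
connected and nonempty it lies in one copy.
-/

theorem SimpleGraph.Reachable.of_adj_closed {W : Type*} {H : SimpleGraph W} {P : W → Prop}
    (hP : ∀ u w, H.Adj u w → P u → P w) {a b : W} (h : H.Reachable a b) (ha : P a) : P b := by
  rw [SimpleGraph.reachable_iff_reflTransGen] at h
  induction h with
  | refl => exact ha
  | tail _ hadj ih => exact hP _ _ hadj ih

theorem exists_ne_prodMk_notMem {α β V : Type*} [Fintype V] [DecidableEq V]
    (X : Finset (α × β × V)) (hX : X.card + 1 < Fintype.card V) (i : α) (ℓ : β) (u : V) :
    ∃ w ≠ u, (i, ℓ, w) ∉ X := by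
  have hlt : X.card < ((Finset.univ.erase u).map ⟨fun w => (i, ℓ, w), fun a b hab => by
      simpa using hab⟩).card := by
    rw [Finset.card_map, Finset.card_erase_of_mem (Finset.mem_univ u), Finset.card_univ]
    omega
  obtain ⟨_, hmem, hnot⟩ := Finset.exists_mem_notMem_of_card_lt_card hlt
  obtain ⟨w, hw, rfl⟩ := Finset.mem_map.mp hmem
  exact ⟨w, Finset.ne_of_mem_erase hw, hnot⟩

section composedGraph

variable {V : Type*} {t : ℕ} {G : Fin t → SimpleGraph V} {v : Fin t → V} {k : ℕ}

theorem composedGraph_adj_same_copy {a b : Fin t × Fin (k + 1) × V}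
    (h : (composedGraph G v k).Adj a b) (ha : a.2.2 ≠ v a.1) :
    a.1 = b.1 ∧ a.2.1 = b.2.1 := by
  rw [composedGraph, SimpleGraph.fromRel_adj] at h
  rcases h with ⟨-, (⟨h₁, h₂, -⟩ | ⟨-, h, -⟩ | ⟨-, -, -, h, -⟩) |
    (⟨h₁, h₂, -⟩ | ⟨-, -, h, -⟩ | ⟨-, -, -, -, h⟩)⟩
  all_goals first | exact ⟨h₁, h₂⟩ | exact ⟨h₁.symm, h₂.symm⟩ | exact absurd h ha

theorem composedGraph_induce_reachable_same_copy {S : Set (Fin t × Fin (k + 1) × V)}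
    {a b : S} (h : ((composedGraph G v k).induce S).Reachable a b)
    (hS : ∀ u ∈ S, u.1 = a.1.1 → u.2.1 = a.1.2.1 → u.2.2 ≠ v u.1) :
    b.1.1 = a.1.1 ∧ b.1.2.1 = a.1.2.1 := by
  refine h.of_adj_closed (P := fun u => u.1.1 = a.1.1 ∧ u.1.2.1 = a.1.2.1) ?_ ⟨rfl, rfl⟩
  rintro ⟨u, hu⟩ w hadj ⟨hu₁, hu₂⟩
  obtain ⟨h₁, h₂⟩ :=
    composedGraph_adj_same_copy (SimpleGraph.comap_adj.mp hadj) (hS u hu hu₁ hu₂)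
  exact ⟨h₁ ▸ hu₁, h₂ ▸ hu₂⟩

theorem composedGraph_designated_notMem_of_connected_compl [Fintype V] [DecidableEq V]
    (hk : 1 ≤ k) {X : Finset (Fin t × Fin (k + 1) × V)} (hX : X.card + 1 < Fintype.card V)
    (hconn : ((composedGraph G v k).induce ((Xᶜ : Finset _) : Set _)).Connected) :
    ∀ x ∈ X, x.2.2 ≠ v x.1 := by
  rintro ⟨i, ℓ, w⟩ hx hxv
  obtain ⟨ℓ', hℓ'⟩ := Fintype.exists_ne_of_one_lt_card (by simp; omega) ℓ
  obtain ⟨a, -, ha⟩ := exists_ne_prodMk_notMem X hX i ℓ (v i)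
  obtain ⟨b, -, hb⟩ := exists_ne_prodMk_notMem X hX i ℓ' (v i)
  have hab := composedGraph_induce_reachable_same_copy
    (hconn.preconnected ⟨(i, ℓ, a), by simpa using ha⟩ ⟨(i, ℓ', b), by simpa using hb⟩)
    (by
      rintro ⟨i', ℓ'', w'⟩ hu hi hl hw
      subst hi hl
      obtain rfl : w' = w := hw.trans hxv.symm
      exact Finset.mem_compl.mp (Finset.mem_coe.mp hu) hx)
  exact hℓ' hab.2

theorem composedGraph_exists_copy_of_connected {X : Finset (Fin t × Fin (k + 1) × V)}
    (hne : X.Nonempty) (hX : ∀ x ∈ X, x.2.2 ≠ v x.1)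
    (hconn : ((composedGraph G v k).induce (X : Set _)).Connected) :
    ∃ i : Fin t, ∃ ℓ : Fin (k + 1), ∀ x ∈ X, x.1 = i ∧ x.2.1 = ℓ := by
  obtain ⟨x₀, hx₀⟩ := hne
  refine ⟨x₀.1, x₀.2.1, fun x hx => ?_⟩
  exact composedGraph_induce_reachable_same_copy
    (hconn.preconnected ⟨x₀, by simpa using hx₀⟩ ⟨x, by simpa using hx⟩)
    fun u hu _ _ => hX u (by simpa using hu)

end composedGraph

theorem stmt_9_general {V : Type*} [Fintype V] [DecidableEq V] {t : ℕ}
    (G : Fin t → SimpleGraph V) (v : Fin t → V) (k : ℕ) (hk : 1 ≤ k)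
    (hbig : k + 2 ≤ Fintype.card V)
    (X : Finset (Fin t × Fin (k + 1) × V)) (hcard : X.card = k)
    (h1 : ((composedGraph G v k).induce (X : Set _)).Connected)
    (h2 : ((composedGraph G v k).induce ((Xᶜ : Finset _) : Set _)).Connected) :
    (∀ x ∈ X, x.2.2 ≠ v x.1) ∧
      ∃ i : Fin t, ∃ ℓ : Fin (k + 1), ∀ x ∈ X, x.1 = i ∧ x.2.1 = ℓ := by
  have hX := composedGraph_designated_notMem_of_connected_compl hk (by omega) h2
  exact ⟨hX, composedGraph_exists_copy_of_connected (Finset.card_pos.mp (by omega)) hX h1⟩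

/-- Any solution `X` of size `k` in the composed graph avoids all designated vertices
and lies entirely inside a single copy. -/
theorem stmt_9 {V : Type*} [Fintype V] [DecidableEq V] {t : ℕ}
    (G : Fin t → SimpleGraph V) (v : Fin t → V) (k : ℕ) (hk : 1 ≤ k)
    (hconn : ∀ i, (G i).Connected) (hbig : k + 2 ≤ Fintype.card V)
    (X : Finset (Fin t × Fin (k + 1) × V)) (hcard : X.card = k)
    (h1 : ((composedGraph G v k).induce (X : Set _)).Connected)
    (h2 : ((composedGraph G v k).induce ((Xᶜ : Finset _) : Set _)).Connected) :
    (∀ x ∈ X, x.2.2 ≠ v x.1) ∧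
      ∃ i : Fin t, ∃ ℓ : Fin (k + 1), ∀ x ∈ X, x.1 = i ∧ x.2.1 = ℓ :=
  stmt_9_general G v k hk hbig X hcard h1 h2
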